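/- arXiv:2201.07047 — 5 statements merged into one kernel-verified Lean document; each statement's English description precedes it below -/
import Mathlib

section
/- Let G(z) = z^{−n} with n ≥ 2 even. If z ≠ 0 satisfies Re(z^{−n}) = 0, then Im(z^{−n}) ≠ 0 and Im(−n·z^{−n−1}) ≠ 0. Hence every tangential contact of the holomorphic vector field 1/zⁿ with the imaginary axis is a fold singularity. -/
/-- For `G z = z^(-n)` with `n ≥ 2` even: if `z ≠ 0` and `Re (z^(-n)) = 0`, then
`Im (z^(-n)) ≠ 0` and `Im (-n·z^(-n-1)) ≠ 0`; hence every tangential contact of `1/z^n`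
with the imaginary axis is a fold singularity. -/
theorem stmt_5 (n : ℕ) (hn : 2 ≤ n) (hev : Even n) (z : ℂ) (hz : z ≠ 0)
    (h0 : (z ^ (-(n : ℤ))).re = 0) :
    (z ^ (-(n : ℤ))).im ≠ 0 ∧ ((-(n : ℂ)) * z ^ (-(n : ℤ) - 1)).im ≠ 0 := by
  have hw0 : z ^ (-(n : ℤ)) ≠ 0 := zpow_ne_zero _ hz
  have him : (z ^ (-(n : ℤ))).im ≠ 0 := by
    intro h
    exact hw0 (Complex.ext h0 h)
  refine ⟨him, ?_⟩
  -- Re z ≠ 0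
  have hre : z.re ≠ 0 := by
    intro h
    -- then z^n is real
    have hzeq : z = (z.im : ℂ) * Complex.I := by
      apply Complex.ext <;> simp [h]
    obtain ⟨k, hk⟩ := hev
    have hIn : Complex.I ^ n = ((-1 : ℝ) ^ k : ℂ) := by
      have : Complex.I ^ n = (Complex.I ^ 2) ^ k := by
        rw [← pow_mul]; congr 1; omega
      simp [Complex.I_sq] at this ⊢
      rw [this]
    have hzn : z ^ n = ((z.im ^ n * (-1 : ℝ) ^ k : ℝ) : ℂ) := by
      rw [hzeq, mul_pow, hIn]
      push_cast
      ring_nf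
      simp
    have : (z ^ (-(n : ℤ))).im = 0 := by
      rw [zpow_neg, zpow_natCast, hzn, ← Complex.ofReal_inv]
      exact Complex.ofReal_im _
    exact him this
  have hz1 : (z⁻¹).re ≠ 0 := by
    rw [Complex.inv_re]
    have hns : Complex.normSq z ≠ 0 := ne_of_gt (Complex.normSq_pos.mpr hz)
    exact div_ne_zero hre hns
  have hsplit : z ^ (-(n : ℤ) - 1) = z ^ (-(n : ℤ)) * z⁻¹ := by
    rw [sub_eq_add_neg, zpow_add₀ hz, zpow_neg_one]
  rw [hsplit]
  have hn0 : (n : ℝ) ≠ 0 := by positivity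
  have hkey : ((-(n : ℂ)) * (z ^ (-(n : ℤ)) * z⁻¹)).im
      = -(n : ℝ) * ((z ^ (-(n : ℤ))).im * (z⁻¹).re) := by
    simp only [Complex.mul_im, Complex.mul_re, Complex.neg_re, Complex.neg_im,
      Complex.natCast_re, Complex.natCast_im, h0]
    ring
  rw [hkey]
  exact mul_ne_zero (neg_ne_zero.mpr hn0) (mul_ne_zero him hz1)
end

section
/- Let b, d, x₀ be nonzero reals, a, c ∈ ℝ, and suppose α := a/b + c/d ≠ 0. Then the map Π(w) = e^{cπ/d}((w − x₀)e^{aπ/b} − x₀) has a unique fixed point, namely w₀ = e^{cπ/d}(1 + e^{aπ/b})x₀ / (e^{απ} − 1), and Π'(w) = e^{απ} for all w. If instead a/b + c/d = 0 and x₀ ≠ 0, then Π has no fixed point. -/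
open Real in
/-- For `Π w = e^{cπ/d}((w - x₀)e^{aπ/b} - x₀)` with `α := a/b + c/d ≠ 0`, the map `Π` has
the unique fixed point `w₀ = e^{cπ/d}(1 + e^{aπ/b}) x₀ / (e^{απ} - 1)` and
`Π' w = e^{απ}` for all `w`. If instead `a/b + c/d = 0` and `x₀ ≠ 0`, then `Π` has no
fixed point. -/
theorem stmt_7 (a b c d x₀ : ℝ) (hb : b ≠ 0) (hd : d ≠ 0)
    (P : ℝ → ℝ)
    (hP : P = fun w => Real.exp (c * π / d) * ((w - x₀) * Real.exp (a * π / b) - x₀)) :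
    (a / b + c / d ≠ 0 →
      (∀ w : ℝ, P w = w ↔
        w = Real.exp (c * π / d) * (1 + Real.exp (a * π / b)) * x₀ /
          (Real.exp ((a / b + c / d) * π) - 1)) ∧
      (∀ w : ℝ, deriv P w = Real.exp ((a / b + c / d) * π))) ∧
    (a / b + c / d = 0 → x₀ ≠ 0 → ∀ w : ℝ, P w ≠ w) := by
  subst hP
  have hexp : Real.exp ((a / b + c / d) * π)
      = Real.exp (a * π / b) * Real.exp (c * π / d) := by
    rw [← Real.exp_add]; congr 1; field_simp
  constructor
  · intro hα
    have hne : Real.exp ((a / b + c / d) * π) ≠ 1 := by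
      rw [Ne, Real.exp_eq_one_iff]
      exact mul_ne_zero hα Real.pi_ne_zero
    have h1 : Real.exp ((a / b + c / d) * π) - 1 ≠ 0 := sub_ne_zero.mpr hne
    constructor
    · intro w
      constructor
      · intro h
        rw [eq_div_iff h1, hexp]
        simp only at h
        linear_combination h
      · intro h
        simp only
        rw [h, hexp] at *
        linear_combination (Real.exp (c * π / d) * (1 + Real.exp (a * π / b)) * x₀) * mul_inv_cancel₀ h1
    · intro w
      have hrw : (fun w : ℝ => Real.exp (c * π / d) * ((w - x₀) * Real.exp (a * π / b) - x₀))
          = fun w : ℝ => (Real.exp (a * π / b) * Real.exp (c * π / d)) * w +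
            (-(Real.exp (c * π / d) * x₀ * Real.exp (a * π / b))
              - Real.exp (c * π / d) * x₀) := by
        funext w; ring
      rw [hrw, hexp, deriv_add_const]
      simpa using (((hasDerivAt_id w).const_mul
        (Real.exp (a * π / b) * Real.exp (c * π / d))).deriv)
  · intro hα hx w h
    have hE : Real.exp (a * π / b) * Real.exp (c * π / d) = 1 := by
      rw [← hexp, hα, zero_mul, Real.exp_zero]
    simp only at h
    have hz : Real.exp (c * π / d) * x₀ * (Real.exp (a * π / b) + 1) = 0 := by
      linear_combination (-1 : ℝ) * h + w * hE
    have h2 : Real.exp (c * π / d) * x₀ ≠ 0 :=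
      mul_ne_zero (Real.exp_ne_zero _) hx
    have h3 : Real.exp (a * π / b) + 1 ≠ 0 := by positivity
    exact (mul_ne_zero h2 h3) hz
end

section
/- The piecewise linear holomorphic system z' = (a+ib)(z−x₀) for Im z > 0 and z' = (c+id)z for Im z < 0, with b, d, x₀ nonzero and a/b + c/d ≠ 0, has exactly one limit cycle crossing the real axis (corresponding to the unique fixed point of its Poincaré map); the cycle is hyperbolic with multiplier e^{(a/b + c/d)π} when b, d > 0. -/
open Real in
/-- The piecewise linear holomorphic system with upper half-return map
`U w = x₀ - (w - x₀)e^{aπ/b}` and lower half-return map `L w = -w e^{cπ/d}` (`b, d > 0`,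
`x₀ ≠ 0`, `a/b + c/d ≠ 0`) has exactly one limit cycle: the composed Poincaré map `L ∘ U`
has a unique fixed point, and the cycle is hyperbolic with multiplier
`e^{(a/b + c/d)π} ≠ 1`. -/
theorem stmt_8 (a c b d x₀ : ℝ) (hb : 0 < b) (hd : 0 < d) (hx : x₀ ≠ 0)
    (hα : a / b + c / d ≠ 0)
    (U L : ℝ → ℝ)
    (hU : U = fun w => x₀ - (w - x₀) * Real.exp (a * π / b))
    (hL : L = fun w => -w * Real.exp (c * π / d)) :
    (∃! w₀ : ℝ, (L ∘ U) w₀ = w₀) ∧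
    (∀ w : ℝ, deriv (L ∘ U) w = Real.exp ((a / b + c / d) * π)) ∧
    Real.exp ((a / b + c / d) * π) ≠ 1 := by
  subst hU hL
  set E₁ := Real.exp (a * π / b) with hE₁
  set E₂ := Real.exp (c * π / d) with hE₂
  set k := Real.exp ((a / b + c / d) * π) with hk
  have hbne : b ≠ 0 := ne_of_gt hb
  have hdne : d ≠ 0 := ne_of_gt hd
  have hkE : E₁ * E₂ = k := by
    rw [hE₁, hE₂, hk, ← Real.exp_add]
    congr 1
    field_simp
  have hk1 : k ≠ 1 := by
    rw [hk, Ne, Real.exp_eq_one_iff]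
    exact mul_ne_zero hα Real.pi_ne_zero
  have hfun : ((fun w => -w * E₂) ∘ (fun w => x₀ - (w - x₀) * E₁)) =
      fun w => k * w + (-x₀ * k - x₀ * E₂) := by
    funext w
    simp only [Function.comp]
    rw [← hkE]
    ring
  refine ⟨?_, ?_, hk1⟩
  · refine ⟨(-x₀ * k - x₀ * E₂) / (1 - k), ?_, ?_⟩
    · rw [hfun]
      field_simp [sub_ne_zero.mpr (Ne.symm hk1)]
      ring
    · intro y hy
      rw [hfun] at hy
      have h1k : 1 - k ≠ 0 := sub_ne_zero.mpr (Ne.symm hk1)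
      simp only at hy
      field_simp
      linear_combination -hy
  · intro w
    rw [hfun]
    have : HasDerivAt (fun w => k * w + (-x₀ * k - x₀ * E₂)) k w := by
      simpa using ((hasDerivAt_id w).const_mul k).add_const (-x₀ * k - x₀ * E₂)
    exact this.deriv
end

section
/- Suppose conformal conjugation: Φ is holomorphic with Φ' ≠ 0, Φ(0) = 0, and for two nonconstant holomorphic F, G with F(0) = G(0) = 0 one has Φ'(z)·F(z) = G(Φ(z)) near 0. If additionally Φ maps the imaginary axis into the imaginary axis, then at a point p on the imaginary axis with Re F(p) ≠ 0, one has Re G(Φ(p)) ≠ 0 and sign(Re G(Φ(p))) is determined by sign(Re F(p)) and the (real, positive or negative) factor by which Φ' scales the normal direction; in particular crossing points map to crossing points. -/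
/-- Conformal conjugation preserves crossing (sewing) points: if `Φ` is conformal near `0`
with `Φ 0 = 0`, mapping the imaginary axis into itself, and nonconstant holomorphic `F, G`
vanish at `0` and satisfy `Φ'(z)·F(z) = G(Φ(z))`, then at a point `p` of the imaginary axis
with `Re F(p) ≠ 0` one has `Φ'(p)` real and `Re G(Φ(p)) = Φ'(p)·Re F(p) ≠ 0`. -/
theorem stmt_16 (Φ F G : ℂ → ℂ) (R : ℝ) (hR : 0 < R)
    (hΦ : DifferentiableOn ℂ Φ (Metric.ball 0 R))
    (hFd : DifferentiableOn ℂ F (Metric.ball 0 R))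
    (hGd : DifferentiableOn ℂ G (Metric.ball 0 R))
    (hΦ' : ∀ z ∈ Metric.ball (0 : ℂ) R, deriv Φ z ≠ 0)
    (hΦ0 : Φ 0 = 0) (hF0 : F 0 = 0) (hG0 : G 0 = 0)
    (hFnc : ¬ ∀ z ∈ Metric.ball (0 : ℂ) R, F z = 0)
    (hGnc : ¬ ∀ z ∈ Metric.ball (0 : ℂ) R, G z = 0)
    (haxis : ∀ z ∈ Metric.ball (0 : ℂ) R, z.re = 0 → (Φ z).re = 0)
    (hconj : ∀ z ∈ Metric.ball (0 : ℂ) R, deriv Φ z * F z = G (Φ z))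
    (p : ℂ) (hp : p ∈ Metric.ball (0 : ℂ) R) (hpre : p.re = 0)
    (hFp : (F p).re ≠ 0) :
    (deriv Φ p).im = 0 ∧
    (G (Φ p)).re = (deriv Φ p).re * (F p).re ∧
    (G (Φ p)).re ≠ 0 := by
  set d := deriv Φ p with hd
  -- Φ is differentiable at p
  have hop : IsOpen (Metric.ball (0 : ℂ) R) := Metric.isOpen_ball
  have h1 : HasDerivAt Φ d p :=
    ((hΦ.differentiableAt (hop.mem_nhds hp)).hasDerivAt)
  -- the curve t ↦ p + t*I
  have h2 : HasDerivAt (fun t : ℝ => p + (t : ℂ) * Complex.I) Complex.I 0 := by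
    have : HasDerivAt (fun t : ℝ => ((t : ℂ))) 1 0 := Complex.ofRealCLM.hasDerivAt
    simpa using (this.mul_const Complex.I).const_add p
  have hc0 : p + ((0 : ℝ) : ℂ) * Complex.I = p := by simp
  have h3 : HasDerivAt (fun t : ℝ => Φ (p + (t : ℂ) * Complex.I)) (Complex.I • d) 0 := by
    have h1' : HasFDerivAt Φ ((ContinuousLinearMap.smulRight (1:ℂ→L[ℂ]ℂ) d).restrictScalars ℝ)
        (p + ((0:ℝ):ℂ) * Complex.I) := by
      rw [hc0]; exact h1.hasFDerivAt.restrictScalars ℝ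
    have := h1'.comp_hasDerivAt 0 h2
    simp [hc0] at this
    exact this
  have h4 : HasDerivAt (fun t : ℝ => (Φ (p + (t : ℂ) * Complex.I)).re)
      (Complex.reCLM (Complex.I • d)) 0 :=
    Complex.reCLM.hasFDerivAt.comp_hasDerivAt 0 h3
  -- the function is eventually 0 near 0
  have heq : (fun t : ℝ => (Φ (p + (t : ℂ) * Complex.I)).re) =ᶠ[nhds (0:ℝ)]
      (fun _ => (0 : ℝ)) := by
    have hpd : dist p 0 < R := Metric.mem_ball.mp hp
    have hε : (0 : ℝ) < R - dist p 0 := by linarith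
    filter_upwards [Metric.ball_mem_nhds (0 : ℝ) hε] with t ht
    apply haxis
    · have : dist (p + (t : ℂ) * Complex.I) 0 ≤ dist p 0 + |t| := by
        simp only [dist_zero_right] at *
        calc ‖p + (t : ℂ) * Complex.I‖ ≤ ‖p‖ + ‖(t : ℂ) * Complex.I‖ := norm_add_le _ _
        _ = ‖p‖ + |t| := by simp
      have ht' : |t| < R - dist p 0 := by simpa [Real.dist_eq] using ht
      exact Metric.mem_ball.mpr (by simp only [dist_zero_right] at *; linarith)
    · simp [hpre]
  have h5 : HasDerivAt (fun _ : ℝ => (0 : ℝ)) (Complex.reCLM (Complex.I • d)) 0 :=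
    h4.congr_of_eventuallyEq heq.symm
  have h6 : Complex.reCLM (Complex.I • d) = 0 := by
    have := h5.deriv
    simpa using this.symm
  have him : d.im = 0 := by
    simpa [Complex.smul_re, Complex.I_re, Complex.I_im] using h6
  have hGre : (G (Φ p)).re = d.re * (F p).re := by
    rw [← hconj p hp, Complex.mul_re, him]
    ring
  refine ⟨him, hGre, ?_⟩
  rw [hGre]
  have hdre : d.re ≠ 0 := by
    intro h
    exact hΦ' p hp (Complex.ext h him)
  exact mul_ne_zero hdre hFp
end

section
/- For the ODE z' = i/(z + i y₀)ⁿ with n odd and y₀ > 0, the polar form (with z + i y₀ = r e^{iθ}) is ṙ = r^{−n} sin((n+1)θ), θ̇ = r^{−n−1} cos((n+1)θ), and H(r,θ) = r·|cos((n+1)θ)|^{1/(n+1)} is a first integral where cos((n+1)θ) ≠ 0; moreover H(r, π−θ) = H(r, θ) when n+1 is even, so orbits are symmetric about the vertical line x = 0. -/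
/-- For `z' = i/(z + i y₀)^n` with `n` odd and `y₀ > 0`, in polar form
(`ṙ = r^(-n) sin((n+1)θ)`, `θ̇ = r^(-n-1) cos((n+1)θ)`), the quantity
`log r + (1/(n+1)) log |cos((n+1)θ)|` is constant along orbits where `cos((n+1)θ) ≠ 0`;
moreover `|cos((n+1)(π-θ))| = |cos((n+1)θ)|` since `n+1` is even, so orbits are symmetric
about the vertical axis. -/
theorem stmt_17 (n : ℕ) (hodd : Odd n) (y₀ : ℝ) (hy : 0 < y₀)
    (r θ : ℝ → ℝ) (t : ℝ)
    (hr : HasDerivAt r (r t ^ (-(n : ℤ)) * Real.sin (((n : ℝ) + 1) * θ t)) t)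
    (hθ : HasDerivAt θ (r t ^ (-(n : ℤ) - 1) * Real.cos (((n : ℝ) + 1) * θ t)) t)
    (hrpos : 0 < r t) (hc : Real.cos (((n : ℝ) + 1) * θ t) ≠ 0) :
    HasDerivAt (fun s => Real.log (r s) +
      (1 / ((n : ℝ) + 1)) * Real.log |Real.cos (((n : ℝ) + 1) * θ s)|) 0 t ∧
    (∀ φ : ℝ, |Real.cos (((n : ℝ) + 1) * (Real.pi - φ))| =
      |Real.cos (((n : ℝ) + 1) * φ)|) := by
  obtain ⟨k, hk⟩ := hodd
  constructor
  · have h1 : HasDerivAt (fun s => Real.log (r s))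
        ((r t ^ (-(n:ℤ)) * Real.sin (((n:ℝ)+1) * θ t)) / r t) t := hr.log hrpos.ne'
    have hu : HasDerivAt (fun s => ((n:ℝ)+1) * θ s)
        (((n:ℝ)+1) * (r t ^ (-(n:ℤ) - 1) * Real.cos (((n:ℝ)+1) * θ t))) t := hθ.const_mul _
    have hcos : HasDerivAt (fun s => Real.cos (((n:ℝ)+1) * θ s))
        (-Real.sin (((n:ℝ)+1) * θ t) *
          (((n:ℝ)+1) * (r t ^ (-(n:ℤ) - 1) * Real.cos (((n:ℝ)+1) * θ t)))) t :=
      (Real.hasDerivAt_cos _).comp t hu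
    have hlog : HasDerivAt (fun s => Real.log (Real.cos (((n:ℝ)+1) * θ s)))
        ((-Real.sin (((n:ℝ)+1) * θ t) *
          (((n:ℝ)+1) * (r t ^ (-(n:ℤ) - 1) * Real.cos (((n:ℝ)+1) * θ t)))) /
          Real.cos (((n:ℝ)+1) * θ t)) t := hcos.log hc
    have heq : (fun s => Real.log (r s) + (1/((n:ℝ)+1)) * Real.log |Real.cos (((n:ℝ)+1) * θ s)|)
        = fun s => Real.log (r s) + (1/((n:ℝ)+1)) * Real.log (Real.cos (((n:ℝ)+1) * θ s)) := by
      funext s; rw [Real.log_abs]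
    rw [heq]
    have h2 := h1.add (hlog.const_mul (1/((n:ℝ)+1)))
    convert h2 using 1
    case e'_4 => rfl
    case e'_5 => rfl
    case e'_8 => rfl
    have hn1 : ((n:ℝ)+1) ≠ 0 := by positivity
    have hz : r t ^ (-(n:ℤ) - 1) = r t ^ (-(n:ℤ)) / r t := by
      rw [zpow_sub₀ hrpos.ne', zpow_one]
    rw [hz]
    field_simp
    ring
  · intro φ
    have h : ((n:ℝ)+1) * (Real.pi - φ) = 2 * Real.pi * ((k:ℝ)+1) - ((n:ℝ)+1)*φ := by
      have : (n:ℝ) = 2*k+1 := by exact_mod_cast congrArg Nat.cast hk |>.trans (by push_cast; ring)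
      rw [this]; ring
    rw [h, Real.cos_sub]
    have hc2 : Real.cos (2 * Real.pi * ((k:ℝ)+1)) = 1 := by
      rw [show (2 * Real.pi * ((k:ℝ)+1)) = (((k:ℤ)+1 : ℤ) : ℝ) * (2*Real.pi) by push_cast; ring,
        Real.cos_int_mul_two_pi]
    have hs2 : Real.sin (2 * Real.pi * ((k:ℝ)+1)) = 0 := by
      have : (2 * Real.pi * ((k:ℝ)+1)) = 2 * ((k:ℝ)+1) * Real.pi := by ring
      rw [this]
      have := Real.sin_int_mul_pi (2*((k:ℤ)+1))
      push_cast at this; convert this using 2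
    rw [hc2, hs2]
    ring_nf
end
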